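/- Let G be a finite simple graph without isolated vertices in which every vertex has degree at least 2. Then there exists an orientation of G such that the number of 1-light vertices equals 2m − μ(G'), where G' is the gadget graph of the construction and μ denotes maximum matching size; in particular, for any maximum matching M of G' and the derived orientation Λ(M), the number of 1-light vertices of Λ(M) is at most 2m − |M|. -/

import Mathlib

/-- An orientation of a simple graph `G`: a relation `D` picking, for each edge,
exactly one of the two directions. -/
def IsOrientation {V : Type*} (G : SimpleGraph V) (D : V → V → Prop) : Prop :=
  (∀ u v, D u v → G.Adj u v) ∧ ∀ u v, G.Adj u v → (D u v ↔ ¬ D v u)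

/-- The out-degree of a vertex under an orientation. -/
noncomputable def outDeg {V : Type*} (D : V → V → Prop) (u : V) : ℕ :=
  {v | D u v}.ncard

/-- The gadget graph G' of the construction.  Vertices: `Sum.inl (e, some u)` is
the subdivision vertex u'_e, `Sum.inl (e, none)` is the connecting vertex x_e,
and `Sum.inr (v, i)` (for `i < d(v) - 2`) is the gadget vertex v''_i.  Edges:
the connecting edges u'_e -- x_e; all edges v''_i -- v'_e for e ∋ v; and, for
each vertex v, one special edge between the two subdivision vertices v'_e, v'_f
for the chosen pair of incident edges `sp v = (e, f)`. -/
def Gprime {V : Type*} (G : SimpleGraph V) (sp : V → Sym2 V × Sym2 V) :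
    SimpleGraph ((Sym2 V × Option V) ⊕ (V × ℕ)) :=
  SimpleGraph.fromRel (fun x y =>
    (∃ u e, x = Sum.inl (e, some u) ∧ y = Sum.inl (e, none) ∧
      e ∈ G.edgeSet ∧ u ∈ e) ∨
    (∃ v i e, x = Sum.inr (v, i) ∧ y = Sum.inl (e, some v) ∧
      e ∈ G.edgeSet ∧ v ∈ e ∧ i + 2 < {w | G.Adj v w}.ncard) ∨
    (∃ v : V, x = Sum.inl ((sp v).1, some v) ∧ y = Sum.inl ((sp v).2, some v)))

/-!
Call the `2m` vertices `u'_e` the subdivision vertices of `G'`, and write `L(D)` for the set of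
1-light vertices of an orientation `D`.

Every edge of `G'` contains a subdivision vertex, its anchor (for a special edge, the first end),
and distinct edges of a matching `M` have distinct anchors. If `D` is a `Λ(M)`, every light
vertex `v` owns one more subdivision vertex that anchors no edge of `M`: the second end of its
special edge if that edge is in `M`, and otherwise an unmatched `v'_e`, because `v'_e` can only be
matched to `x_e`, which directs `e` out of `v` (possible for at most one `e`), or to one of the
`d(v) - 2` gadget vertices. Hence `|L(Λ(M))| + |M| ≤ 2m`.

Conversely, for any orientation `D`, match `u'_e` with `x_e` whenever `e` leaves `u`; at each
vertex `v` use the special edge if `v` is light and both special edges enter `v`, and match as many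
of the remaining incoming `v'_e` as possible to gadget vertices. Then at most one subdivision
vertex per vertex, and only at light vertices, anchors no matching edge, so this matching has at
least `2m - |L(D)|` edges. For a maximum matching `M` the two bounds give
`|L(Λ(M))| = 2m - μ(G')`.
-/

section

open Set SimpleGraph

lemma SimpleGraph.Subgraph.IsMatching.eq_of_mem_edgeSet {W : Type*} {H : SimpleGraph W}
    {M : H.Subgraph} (hM : M.IsMatching) {p q : Sym2 W} (hp : p ∈ M.edgeSet)
    (hq : q ∈ M.edgeSet) {x : W} (hxp : x ∈ p) (hxq : x ∈ q) : p = q := by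
  induction p with | _ a b => induction q with | _ c d =>
  rw [Subgraph.mem_edgeSet] at hp hq
  rcases Sym2.mem_iff.mp hxp with rfl | rfl <;> rcases Sym2.mem_iff.mp hxq with rfl | rfl
  · rw [hM.eq_of_adj_left hp hq]
  · rw [hM.eq_of_adj_left hp (M.adj_symm hq), Sym2.eq_swap]
  · rw [hM.eq_of_adj_left (M.adj_symm hp) hq, Sym2.eq_swap]
  · rw [hM.eq_of_adj_right hp hq]

variable {V : Type*} {G : SimpleGraph V} {D : V → V → Prop}

lemma IsOrientation.not_rev (hD : IsOrientation G D) {a b : V} (h : D a b) : ¬ D b a :=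
  (hD.2 a b (hD.1 a b h)).mp h

lemma IsOrientation.or_rev (hD : IsOrientation G D) {a b : V} (h : G.Adj a b) :
    D a b ∨ D b a :=
  (em (D a b)).imp_right (hD.2 b a h.symm).mpr

def inEdges (D : V → V → Prop) (v : V) : Set (Sym2 V) := (fun w => s(w, v)) '' {w | D w v}

lemma ncard_inEdges (v : V) : (inEdges D v).ncard = {w | D w v}.ncard :=
  ncard_image_of_injective _ fun _ _ h => Sym2.congr_left.mp h

lemma IsOrientation.ncard_inEdges_add_outDeg [Finite V] (hD : IsOrientation G D)
    (v : V) : (inEdges D v).ncard + outDeg D v = {w | G.Adj v w}.ncard := by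
  rw [ncard_inEdges]
  have h : {w | G.Adj v w} = {w | D w v} ∪ {w | D v w} := by
    ext w
    exact ⟨fun h => (hD.or_rev h).symm, fun h => h.elim (fun h => (hD.1 w v h).symm) (hD.1 v w)⟩
  rw [h, outDeg]
  exact (ncard_union_eq (Set.disjoint_left.mpr fun w h h' => hD.not_rev h h')).symm

lemma finite_inEdges [Finite V] {v : V} : (inEdges D v).Finite := (toFinite _).image _

lemma IsOrientation.mem_edgeSet_of_mem_inEdges (hD : IsOrientation G D) {v : V} {e : Sym2 V}
    (he : e ∈ inEdges D v) : e ∈ G.edgeSet ∧ v ∈ e := by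
  obtain ⟨w, hw, rfl⟩ := he
  exact ⟨(hD.1 w v hw : G.Adj w v), Sym2.mem_mk_right _ _⟩

lemma IsOrientation.notMem_inEdges (hD : IsOrientation G D) {v w : V} (h : D v w) :
    s(v, w) ∉ inEdges D v := by
  rintro ⟨w', hw', he⟩
  rcases Sym2.eq_iff.mp he with ⟨rfl, -⟩ | ⟨rfl, -⟩
  · exact (hD.1 _ _ hw').ne rfl
  · exact hD.not_rev h hw'

lemma IsOrientation.mem_inEdges_of_forall_not (hD : IsOrientation G D) {v : V}
    (hout : ∀ w, ¬ D v w) {e : Sym2 V} (he : e ∈ G.edgeSet) (hv : v ∈ e) :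
    e ∈ inEdges D v := by
  obtain ⟨w, rfl⟩ := Sym2.mem_iff_exists.mp hv
  exact ⟨w, ((hD.or_rev he).resolve_left (hout w)), Sym2.eq_swap⟩

end

namespace Gprime
open Set SimpleGraph

variable {V : Type*}

abbrev GVert (V : Type*) := (Sym2 V × Option V) ⊕ (V × ℕ)

def specialEdge (sp : V → Sym2 V × Sym2 V) (v : V) : Sym2 (GVert V) :=
  s(Sum.inl ((sp v).1, some v), Sum.inl ((sp v).2, some v))

lemma mem_specialEdge {sp : V → Sym2 V × Sym2 V} {v : V} {z : GVert V}
    (hz : z ∈ specialEdge sp v) : ∃ e, z = Sum.inl (e, some v) := by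
  rcases Sym2.mem_iff.mp hz with rfl | rfl
  exacts [⟨_, rfl⟩, ⟨_, rfl⟩]

lemma eq_of_specialEdge_eq {sp : V → Sym2 V × Sym2 V} {v v' : V}
    (h : specialEdge sp v = specialEdge sp v') : v = v' := by
  have hmem : Sum.inl ((sp v).1, some v) ∈ specialEdge sp v' := h ▸ Sym2.mem_mk_left _ _
  obtain ⟨e, he⟩ := mem_specialEdge hmem
  simp only [Sum.inl.injEq, Prod.mk.injEq, Option.some.injEq] at he
  exact he.2

variable {G : SimpleGraph V} {sp : V → Sym2 V × Sym2 V}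

lemma mem_edgeSet_cases {p : Sym2 (GVert V)} (hp : p ∈ (Gprime G sp).edgeSet) :
    (∃ e ∈ G.edgeSet, ∃ u ∈ e, p = s(Sum.inl (e, some u), Sum.inl (e, none))) ∨
    (∃ e ∈ G.edgeSet, ∃ v ∈ e, ∃ i, i + 2 < {w | G.Adj v w}.ncard ∧
      p = s(Sum.inl (e, some v), Sum.inr (v, i))) ∨
    ∃ v, p = specialEdge sp v := by
  induction p with | _ x y =>
  rw [mem_edgeSet, Gprime, fromRel_adj] at hp
  obtain ⟨-, h | h⟩ := hp
  · rcases h with ⟨u, e, rfl, rfl, he, hu⟩ | ⟨v, i, e, rfl, rfl, he, hv, hi⟩ |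
      ⟨v, rfl, rfl⟩
    · exact .inl ⟨e, he, u, hu, rfl⟩
    · exact .inr (.inl ⟨e, he, v, hv, i, hi, Sym2.eq_swap⟩)
    · exact .inr (.inr ⟨v, rfl⟩)
  · rcases h with ⟨u, e, rfl, rfl, he, hu⟩ | ⟨v, i, e, rfl, rfl, he, hv, hi⟩ |
      ⟨v, rfl, rfl⟩
    · exact .inl ⟨e, he, u, hu, Sym2.eq_swap⟩
    · exact .inr (.inl ⟨e, he, v, hv, i, hi, rfl⟩)
    · exact .inr (.inr ⟨v, Sym2.eq_swap⟩)

lemma adj_connector {e : Sym2 V} {u : V} (he : e ∈ G.edgeSet) (hu : u ∈ e) :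
    (Gprime G sp).Adj (Sum.inl (e, some u)) (Sum.inl (e, none)) := by
  rw [Gprime, fromRel_adj]
  exact ⟨by simp, .inl (.inl ⟨u, e, rfl, rfl, he, hu⟩)⟩

lemma adj_gadget {e : Sym2 V} {v : V} {i : ℕ} (he : e ∈ G.edgeSet) (hv : v ∈ e)
    (hi : i + 2 < {w | G.Adj v w}.ncard) :
    (Gprime G sp).Adj (Sum.inl (e, some v)) (Sum.inr (v, i)) := by
  rw [Gprime, fromRel_adj]
  exact ⟨by simp, .inr (.inr (.inl ⟨v, i, e, rfl, rfl, he, hv, hi⟩))⟩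

lemma adj_special {v : V} (h : (sp v).1 ≠ (sp v).2) :
    (Gprime G sp).Adj (Sum.inl ((sp v).1, some v)) (Sum.inl ((sp v).2, some v)) := by
  rw [Gprime, fromRel_adj]
  exact ⟨by simp [h], .inl (.inr (.inr ⟨v, rfl, rfl⟩))⟩

lemma adj_subdivision_cases {e : Sym2 V} {v : V} {y : GVert V}
    (h : (Gprime G sp).Adj (Sum.inl (e, some v)) y) :
    y = Sum.inl (e, none) ∨ (∃ i, i + 2 < {w | G.Adj v w}.ncard ∧ y = Sum.inr (v, i)) ∨
      s(Sum.inl (e, some v), y) = specialEdge sp v := by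
  rcases mem_edgeSet_cases (p := s(Sum.inl (e, some v), y)) h with
    ⟨e', -, u, -, hp⟩ | ⟨e', -, v', -, i, hi, hp⟩ | ⟨v', hp⟩
  · left
    simp only [Sym2.eq_iff, Sum.inl.injEq, Prod.mk.injEq, reduceCtorEq, and_false,
      false_and, or_false] at hp
    rw [hp.2, ← hp.1.1]
  · right; left
    simp only [Sym2.eq_iff, Sum.inl.injEq, Prod.mk.injEq, Option.some.injEq, reduceCtorEq,
      false_and, or_false] at hp
    exact ⟨i, hp.1.2 ▸ hi, hp.1.2 ▸ hp.2⟩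
  · right; right
    have hmem : Sum.inl (e, some v) ∈ specialEdge sp v' := hp ▸ Sym2.mem_mk_left _ _
    obtain ⟨_, hv⟩ := mem_specialEdge hmem
    simp only [Sum.inl.injEq, Prod.mk.injEq, Option.some.injEq] at hv
    obtain ⟨_, rfl⟩ := hv
    exact hp

structure IsSpecialPair (G : SimpleGraph V) (v : V) (p : Sym2 V × Sym2 V) : Prop where
  fst_mem_edgeSet : p.1 ∈ G.edgeSet
  snd_mem_edgeSet : p.2 ∈ G.edgeSet
  mem_fst : v ∈ p.1
  mem_snd : v ∈ p.2
  fst_ne_snd : p.1 ≠ p.2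

lemma IsSpecialPair.two_le_ncard_adj [Finite V] {v : V} {p : Sym2 V × Sym2 V}
    (h : IsSpecialPair G v p) : 2 ≤ {w | G.Adj v w}.ncard := by
  obtain ⟨a, ha⟩ := Sym2.mem_iff_exists.mp h.mem_fst
  obtain ⟨b, hb⟩ := Sym2.mem_iff_exists.mp h.mem_snd
  have hab : a ≠ b := by rintro rfl; exact h.fst_ne_snd (ha.trans hb.symm)
  rw [← ncard_pair hab]
  refine ncard_le_ncard ?_ (toFinite _)
  rintro w (rfl | rfl)
  exacts [show s(v, w) ∈ G.edgeSet from ha ▸ h.fst_mem_edgeSet,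
    show s(v, w) ∈ G.edgeSet from hb ▸ h.snd_mem_edgeSet]

def subdivisionVertex (G : SimpleGraph V) (d : G.Dart) : GVert V :=
  Sum.inl (s(d.fst, d.snd), some d.fst)

lemma subdivisionVertex_injective : Function.Injective (subdivisionVertex G) := by
  rintro ⟨⟨a, b⟩, hab⟩ ⟨⟨c, d⟩, hcd⟩ h
  simp only [subdivisionVertex, Sum.inl.injEq, Prod.mk.injEq, Option.some.injEq] at h
  obtain ⟨h, rfl⟩ := h
  obtain rfl := Sym2.congr_right.mp h
  rfl

lemma mem_range_subdivisionVertex {e : Sym2 V} {u : V} (he : e ∈ G.edgeSet) (hu : u ∈ e) :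
    Sum.inl (e, some u) ∈ range (subdivisionVertex G) := by
  obtain ⟨w, rfl⟩ := Sym2.mem_iff_exists.mp hu
  exact ⟨⟨(u, w), he⟩, rfl⟩

lemma card_dart_eq_two_mul_ncard_edgeSet [Fintype V] :
    Nat.card G.Dart = 2 * G.edgeSet.ncard := by
  classical
  rw [Nat.card_eq_fintype_card, dart_card_eq_twice_card_edges, ← coe_edgeFinset, ncard_coe_finset]

lemma ncard_range_subdivisionVertex [Fintype V] :
    (range (subdivisionVertex G)).ncard = 2 * G.edgeSet.ncard := by
  rw [← image_univ, ncard_image_of_injective _ subdivisionVertex_injective, ncard_univ,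
    card_dart_eq_two_mul_ncard_edgeSet]

def IsAnchor (G : SimpleGraph V) (sp : V → Sym2 V × Sym2 V) (p : Sym2 (GVert V))
    (w : GVert V) : Prop :=
  w ∈ p ∧ w ∈ range (subdivisionVertex G) ∧
    ∀ v, p = specialEdge sp v → w = Sum.inl ((sp v).1, some v)

lemma inl_none_notMem_range {e : Sym2 V} :
    Sum.inl (e, none) ∉ range (subdivisionVertex G) := by
  simp [subdivisionVertex]

lemma inr_notMem_range {v : V} {i : ℕ} :
    Sum.inr (v, i) ∉ range (subdivisionVertex G) := by
  simp [subdivisionVertex]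

lemma IsAnchor.eq_left {a c w : GVert V} (hc : c ∉ range (subdivisionVertex G))
    (hw : IsAnchor G sp s(a, c) w) : w = a := by
  rcases Sym2.mem_iff.mp hw.1 with rfl | rfl
  · rfl
  · exact absurd hw.2.1 hc

lemma isAnchor_of_notMem_specialEdge {a c : GVert V} (ha : a ∈ range (subdivisionVertex G))
    (hc : ∀ v, c ∉ specialEdge sp v) : IsAnchor G sp s(a, c) a :=
  ⟨Sym2.mem_mk_left _ _, ha, fun v hv => absurd (hv ▸ Sym2.mem_mk_right a c) (hc v)⟩

lemma isAnchor_connector {e : Sym2 V} {u : V}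
    (ha : Sum.inl (e, some u) ∈ range (subdivisionVertex G)) :
    IsAnchor G sp s(Sum.inl (e, some u), Sum.inl (e, none)) (Sum.inl (e, some u)) :=
  isAnchor_of_notMem_specialEdge ha fun v hv => by
    obtain ⟨_, h⟩ := mem_specialEdge hv
    simp at h

lemma isAnchor_gadget {e : Sym2 V} {v : V} {i : ℕ}
    (ha : Sum.inl (e, some v) ∈ range (subdivisionVertex G)) :
    IsAnchor G sp s(Sum.inl (e, some v), Sum.inr (v, i)) (Sum.inl (e, some v)) :=
  isAnchor_of_notMem_specialEdge ha fun v hv => by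
    obtain ⟨_, h⟩ := mem_specialEdge hv
    simp at h

lemma isAnchor_specialEdge {v : V} (h : IsSpecialPair G v (sp v)) :
    IsAnchor G sp (specialEdge sp v) (Sum.inl ((sp v).1, some v)) :=
  ⟨Sym2.mem_mk_left _ _, mem_range_subdivisionVertex h.fst_mem_edgeSet h.mem_fst,
    fun v' hv' => by rw [eq_of_specialEdge_eq hv']⟩

lemma exists_isAnchor (hsp : ∀ v, IsSpecialPair G v (sp v)) {p : Sym2 (GVert V)}
    (hp : p ∈ (Gprime G sp).edgeSet) : ∃ w, IsAnchor G sp p w := by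
  rcases mem_edgeSet_cases hp with
    ⟨e, he, u, hu, rfl⟩ | ⟨e, he, v, hv, i, -, rfl⟩ | ⟨v, rfl⟩
  exacts [⟨_, isAnchor_connector (mem_range_subdivisionVertex he hu)⟩,
    ⟨_, isAnchor_gadget (mem_range_subdivisionVertex he hv)⟩,
    ⟨_, isAnchor_specialEdge (hsp v)⟩]

lemma IsAnchor.eq {p : Sym2 (GVert V)} (hp : p ∈ (Gprime G sp).edgeSet) {w w' : GVert V}
    (hw : IsAnchor G sp p w) (hw' : IsAnchor G sp p w') : w = w' := by
  rcases mem_edgeSet_cases hp with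
    ⟨e, -, u, -, rfl⟩ | ⟨e, -, v, -, i, -, rfl⟩ | ⟨v, rfl⟩
  · rw [hw.eq_left inl_none_notMem_range, hw'.eq_left inl_none_notMem_range]
  · rw [hw.eq_left inr_notMem_range, hw'.eq_left inr_notMem_range]
  · rw [hw.2.2 v rfl, hw'.2.2 v rfl]

/-! ### The bound `|L(D)| + |M| ≤ 2m` for `D = Λ(M)` -/

/-- `D` is one of the orientations `Λ(M)`. -/
def FollowsMatching (G : SimpleGraph V) (sp : V → Sym2 V × Sym2 V)
    (M : (Gprime G sp).Subgraph) (D : V → V → Prop) : Prop :=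
  ∀ u v, G.Adj u v →
    s(Sum.inl (s(u, v), some u), Sum.inl (s(u, v), none)) ∈ M.edgeSet → D u v

variable {M : (Gprime G sp).Subgraph} {D : V → V → Prop}

lemma exists_notMem_verts_of_outDeg_le_one [Finite V] (hM : M.IsMatching)
    (hD : FollowsMatching G sp M D) {v : V} (hdeg : 2 ≤ {w | G.Adj v w}.ncard)
    (hv : outDeg D v ≤ 1) (hs : specialEdge sp v ∉ M.edgeSet) :
    ∃ w, G.Adj v w ∧ (Sum.inl (s(v, w), some v) : GVert V) ∉ M.verts := by
  by_contra! hcov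
  choose! π hπ using fun w hw => (hM (hcov w hw)).exists
  have hinj : InjOn π {w | G.Adj v w} := fun w hw w' hw' h => by
    have := hM.eq_of_adj_right (hπ w hw) (h ▸ hπ w' hw')
    simp only [Sum.inl.injEq, Prod.mk.injEq, and_true] at this
    exact Sym2.congr_right.mp this
  have hmaps : ∀ w ∈ {w | G.Adj v w},
      π w ∈ (fun w => Sum.inl (s(v, w), none)) '' {w | D v w} ∪
        (fun i => Sum.inr (v, i)) '' Iio ({w | G.Adj v w}.ncard - 2) := by
    intro w hw
    rcases adj_subdivision_cases (M.adj_sub (hπ w hw)) with h | ⟨i, hi, h⟩ | h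
    · exact .inl ⟨w, hD v w hw (h ▸ hπ w hw), h.symm⟩
    · exact .inr ⟨i, by rw [mem_Iio]; omega, h.symm⟩
    · exact absurd (h ▸ hπ w hw) hs
  have hcard := (ncard_le_ncard_of_injOn π hmaps hinj (toFinite _)).trans (ncard_union_le _ _)
  have hout := ncard_image_le (f := fun w => (Sum.inl (s(v, w), none) : GVert V))
    (s := {w | D v w}) (toFinite _)
  have hgad := ncard_image_le (f := fun i => (Sum.inr (v, i) : GVert V))
    (s := Iio ({w | G.Adj v w}.ncard - 2)) (toFinite _)
  rw [ncard_Iio_nat] at hgad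
  unfold outDeg at hv
  omega

lemma exists_free_subdivisionVertex [Finite V] (hsp : ∀ v, IsSpecialPair G v (sp v))
    (hM : M.IsMatching) (hD : FollowsMatching G sp M D) {v : V} (hv : outDeg D v ≤ 1) :
    ∃ w ∈ range (subdivisionVertex G), (∃ e, w = Sum.inl (e, some v)) ∧
      ∀ p ∈ M.edgeSet, ¬ IsAnchor G sp p w := by
  by_cases hs : specialEdge sp v ∈ M.edgeSet
  · refine ⟨_, mem_range_subdivisionVertex (hsp v).snd_mem_edgeSet (hsp v).mem_snd, ⟨_, rfl⟩,
      fun p hp hw => ?_⟩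
    have h := hw.2.2 v (hM.eq_of_mem_edgeSet hp hs hw.1 (Sym2.mem_mk_right _ _))
    simp only [Sum.inl.injEq, Prod.mk.injEq, and_true] at h
    exact (hsp v).fst_ne_snd h.symm
  · obtain ⟨w, hw, hfree⟩ :=
      exists_notMem_verts_of_outDeg_le_one hM hD (hsp v).two_le_ncard_adj hv hs
    exact ⟨_, mem_range_subdivisionVertex hw (Sym2.mem_mk_left _ _), ⟨_, rfl⟩,
      fun p hp ha => hfree (Subgraph.mem_verts_of_mem_edge hp ha.1)⟩

lemma exists_injOn_isAnchor (hsp : ∀ v, IsSpecialPair G v (sp v)) (hM : M.IsMatching) :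
    ∃ φ : Sym2 (GVert V) → GVert V,
      InjOn φ M.edgeSet ∧ ∀ p ∈ M.edgeSet, IsAnchor G sp p (φ p) := by
  have h : ∀ p, ∃ w, p ∈ M.edgeSet → IsAnchor G sp p w := fun p => by
    by_cases hp : p ∈ M.edgeSet
    · exact (exists_isAnchor hsp (M.edgeSet_subset hp)).imp fun _ h _ => h
    · induction p with | _ x y => exact ⟨x, fun h => absurd h hp⟩
  choose φ hφ using h
  exact ⟨φ, fun p hp q hq h => hM.eq_of_mem_edgeSet hp hq (hφ p hp).1 (h ▸ (hφ q hq).1),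
    hφ⟩

lemma finite_edgeSet_of_isMatching [Fintype V] (hsp : ∀ v, IsSpecialPair G v (sp v))
    (hM : M.IsMatching) : M.edgeSet.Finite := by
  classical
  obtain ⟨φ, hφinj, hφ⟩ := exists_injOn_isAnchor hsp hM
  exact Finite.of_finite_image
    ((finite_range _).subset (image_subset_iff.mpr fun p hp => (hφ p hp).2.1)) hφinj

theorem ncard_light_add_ncard_edgeSet_le [Fintype V] (hsp : ∀ v, IsSpecialPair G v (sp v))
    (hM : M.IsMatching) (hD : FollowsMatching G sp M D) :
    {v | outDeg D v ≤ 1}.ncard + M.edgeSet.ncard ≤ 2 * G.edgeSet.ncard := by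
  classical
  set L := {v | outDeg D v ≤ 1}
  obtain ⟨φ, hφinj, hφ⟩ := exists_injOn_isAnchor hsp hM
  have h : ∀ v, ∃ w, v ∈ L → w ∈ range (subdivisionVertex G) ∧
      (∃ e, w = Sum.inl (e, some v)) ∧ ∀ p ∈ M.edgeSet, ¬ IsAnchor G sp p w := fun v => by
    by_cases hv : v ∈ L
    · exact (exists_free_subdivisionVertex hsp hM hD hv).imp fun _ h _ => h
    · exact ⟨Sum.inr (v, 0), fun h => absurd h hv⟩
  choose ψ hψ using h
  have hψinj : InjOn ψ L := fun v hv v' hv' h => by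
    obtain ⟨e, he⟩ := (hψ v hv).2.1
    obtain ⟨e', he'⟩ := (hψ v' hv').2.1
    rw [h, he'] at he
    simp only [Sum.inl.injEq, Prod.mk.injEq, Option.some.injEq] at he
    exact he.2.symm
  have hdisj : Disjoint (ψ '' L) (φ '' M.edgeSet) := by
    rw [Set.disjoint_left]
    rintro _ ⟨v, hv, rfl⟩ ⟨p, hp, hpv⟩
    exact (hψ v hv).2.2 p hp (hpv ▸ hφ p hp)
  have hsub : ψ '' L ∪ φ '' M.edgeSet ⊆ range (subdivisionVertex G) :=
    union_subset (image_subset_iff.mpr fun v hv => (hψ v hv).1)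
      (image_subset_iff.mpr fun p hp => (hφ p hp).2.1)
  calc L.ncard + M.edgeSet.ncard
      = (ψ '' L ∪ φ '' M.edgeSet).ncard := by
        rw [ncard_union_eq hdisj (toFinite _)
          ((finite_range _).subset (subset_union_right.trans hsub)),
          hψinj.ncard_image, hφinj.ncard_image]
    _ ≤ (range (subdivisionVertex G)).ncard := ncard_le_ncard hsub (finite_range _)
    _ = 2 * G.edgeSet.ncard := ncard_range_subdivisionVertex

lemma exists_isOrientation_followsMatching (hM : M.IsMatching) :
    ∃ D, IsOrientation G D ∧ FollowsMatching G sp M D := by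
  set inM : V → V → Prop := fun u v =>
    s(Sum.inl (s(u, v), some u), Sum.inl (s(u, v), none)) ∈ M.edgeSet
  -- the two connecting edges of `e` share the vertex `x_e`
  have hnot : ∀ u v, G.Adj u v → inM u v → ¬ inM v u := by
    intro u v huv h h'
    simp only [inM, Sym2.eq_swap (a := v)] at h'
    have := hM.eq_of_mem_edgeSet h h' (Sym2.mem_mk_right _ _) (Sym2.mem_mk_right _ _)
    simp only [Sym2.eq_iff, Sum.inl.injEq, Prod.mk.injEq, Option.some.injEq, and_true,
      reduceCtorEq, and_false, or_false] at this
    exact huv.ne this.2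
  refine ⟨fun u v => G.Adj u v ∧ (inM u v ∨ ¬ inM v u ∧ WellOrderingRel u v),
    ⟨fun u v h => h.1, fun u v huv => ?_⟩, fun u v huv h => ⟨huv, .inl h⟩⟩
  have := hnot u v huv
  have := hnot v u huv.symm
  have := trichotomous_of WellOrderingRel u v
  have := fun h : WellOrderingRel u v => asymm (r := WellOrderingRel) h
  have := huv.ne
  have := huv.symm
  tauto

lemma ncard_edgeSet_le_of_isMatching [Fintype V] (hsp : ∀ v, IsSpecialPair G v (sp v))
    (hM : M.IsMatching) : M.edgeSet.ncard ≤ 2 * G.edgeSet.ncard := by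
  obtain ⟨D, -, hD⟩ := exists_isOrientation_followsMatching hM
  have := ncard_light_add_ncard_edgeSet_le hsp hM hD
  omega

/-! ### A matching with at least `2m - |L(D)|` edges -/

def UsesSpecial (sp : V → Sym2 V × Sym2 V) (D : V → V → Prop) (v : V) : Prop :=
  outDeg D v ≤ 1 ∧ (sp v).1 ∈ inEdges D v ∧ (sp v).2 ∈ inEdges D v

open Classical in
noncomputable def gadgetCandidates (sp : V → Sym2 V × Sym2 V) (D : V → V → Prop) (v : V) :
    Set (Sym2 V) :=
  if UsesSpecial sp D v then inEdges D v \ {(sp v).1, (sp v).2} else inEdges D v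

lemma gadgetCandidates_subset (v : V) : gadgetCandidates sp D v ⊆ inEdges D v := by
  unfold gadgetCandidates
  split_ifs
  exacts [sdiff_subset, subset_rfl]

lemma usesSpecial_of_outDeg_eq_zero [Finite V] {v : V} (hsp : IsSpecialPair G v (sp v))
    (hD : IsOrientation G D) (h : outDeg D v = 0) : UsesSpecial sp D v := by
  have hout : ∀ w, ¬ D v w := fun w hw => by
    rw [outDeg, ncard_eq_zero (toFinite _)] at h
    exact h.subset hw
  exact ⟨h.le.trans zero_le_one,
    hD.mem_inEdges_of_forall_not hout hsp.fst_mem_edgeSet hsp.mem_fst,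
    hD.mem_inEdges_of_forall_not hout hsp.snd_mem_edgeSet hsp.mem_snd⟩

/-- For `e ∈ edges v`, the subdivision vertex `v'_e` is matched to the gadget vertex
`v''_(index v e)`. -/
structure GadgetAssignment (G : SimpleGraph V) (sp : V → Sym2 V × Sym2 V)
    (D : V → V → Prop) where
  edges : V → Set (Sym2 V)
  index : V → Sym2 V → ℕ
  edges_subset : ∀ v, edges v ⊆ gadgetCandidates sp D v
  ncard_edges : ∀ v,
    (edges v).ncard = min (gadgetCandidates sp D v).ncard ({w | G.Adj v w}.ncard - 2)
  injOn_index : ∀ v, InjOn (index v) (edges v)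
  index_lt : ∀ v, ∀ e ∈ edges v, index v e + 2 < {w | G.Adj v w}.ncard

lemma nonempty_gadgetAssignment [Finite V] : Nonempty (GadgetAssignment G sp D) := by
  have h : ∀ v, ∃ T ⊆ gadgetCandidates sp D v, ∃ ι : Sym2 V → ℕ,
      T.ncard = min (gadgetCandidates sp D v).ncard ({w | G.Adj v w}.ncard - 2) ∧
      InjOn ι T ∧ ∀ e ∈ T, ι e + 2 < {w | G.Adj v w}.ncard := fun v => by
    obtain ⟨T, hT, hTcard⟩ := exists_subset_card_eq
      (min_le_left (gadgetCandidates sp D v).ncard ({w | G.Adj v w}.ncard - 2))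
    have hTfin : T.Finite := finite_inEdges.subset (hT.trans (gadgetCandidates_subset v))
    have hle : T.encard ≤ (Iio ({w | G.Adj v w}.ncard - 2)).encard := by
      rw [← hTfin.cast_ncard_eq, ← (finite_Iio _).cast_ncard_eq, ncard_Iio_nat, hTcard]
      exact_mod_cast min_le_right _ _
    obtain ⟨ι, hιmaps, hιinj⟩ := hTfin.exists_injOn_of_encard_le hle
    exact ⟨T, hT, ι, hTcard, hιinj, fun e he => by
      have : ι e < _ := hιmaps he
      omega⟩
  choose T hT ι hTcard hι hιlt using h
  exact ⟨⟨T, ι, hT, hTcard, hι, hιlt⟩⟩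

namespace GadgetAssignment

variable (A : GadgetAssignment G sp D)

def rel (x y : GVert V) : Prop :=
  (∃ u w, D u w ∧ x = Sum.inl (s(u, w), some u) ∧ y = Sum.inl (s(u, w), none)) ∨
  (∃ v, UsesSpecial sp D v ∧
    x = Sum.inl ((sp v).1, some v) ∧ y = Sum.inl ((sp v).2, some v)) ∨
  (∃ v, ∃ e ∈ A.edges v, x = Sum.inl (e, some v) ∧ y = Sum.inr (v, A.index v e))

lemma mem_inEdges_of_mem_edges {v : V} {e : Sym2 V} (he : e ∈ A.edges v) :
    e ∈ inEdges D v :=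
  gadgetCandidates_subset v (A.edges_subset v he)

lemma notMem_special_of_mem_edges {v : V} {e : Sym2 V} (he : e ∈ A.edges v)
    (hU : UsesSpecial sp D v) : e ∉ ({(sp v).1, (sp v).2} : Set (Sym2 V)) := by
  have h := A.edges_subset v he
  rw [gadgetCandidates, if_pos hU] at h
  exact h.2

lemma adj_of_rel (hD : IsOrientation G D) (hne : ∀ v, (sp v).1 ≠ (sp v).2) {x y : GVert V}
    (h : A.rel x y) : (Gprime G sp).Adj x y := by
  rcases h with ⟨u, w, h, rfl, rfl⟩ | ⟨v, -, rfl, rfl⟩ | ⟨v, e, he, rfl, rfl⟩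
  · exact adj_connector (hD.1 u w h) (Sym2.mem_mk_left _ _)
  · exact adj_special (hne v)
  · obtain ⟨he', hv⟩ := hD.mem_edgeSet_of_mem_inEdges (A.mem_inEdges_of_mem_edges he)
    exact adj_gadget he' hv (A.index_lt v e he)

def matching (hD : IsOrientation G D) (hne : ∀ v, (sp v).1 ≠ (sp v).2) :
    (Gprime G sp).Subgraph where
  verts := {x | ∃ y, A.rel x y ∨ A.rel y x}
  Adj x y := A.rel x y ∨ A.rel y x
  adj_sub h := h.elim (A.adj_of_rel hD hne) fun h => (A.adj_of_rel hD hne h).symm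
  edge_vert h := ⟨_, h⟩
  symm := ⟨fun _ _ => Or.symm⟩

open Classical in
noncomputable def partner (u : V) (e : Sym2 V) : GVert V :=
  if e ∉ inEdges D u then Sum.inl (e, none)
  else if UsesSpecial sp D u ∧ e = (sp u).1 then Sum.inl ((sp u).2, some u)
  else if UsesSpecial sp D u ∧ e = (sp u).2 then Sum.inl ((sp u).1, some u)
  else Sum.inr (u, A.index u e)

lemma eq_partner (hD : IsOrientation G D) (hne : ∀ v, (sp v).1 ≠ (sp v).2) {u : V}
    {e : Sym2 V} {y : GVert V}
    (h : A.rel (Sum.inl (e, some u)) y ∨ A.rel y (Sum.inl (e, some u))) :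
    y = A.partner u e := by
  rcases h with (⟨u', w, huw, hx, rfl⟩ | ⟨v, hU, hx, rfl⟩ | ⟨v, e', he', hx, rfl⟩) |
    (⟨_, _, -, -, hx⟩ | ⟨v, hU, rfl, hx⟩ | ⟨_, _, -, -, hx⟩) <;>
    simp only [Sum.inl.injEq, Prod.mk.injEq, Option.some.injEq, reduceCtorEq, and_false]
      at hx <;> obtain ⟨rfl, rfl⟩ := hx
  · rw [partner, if_pos (hD.notMem_inEdges huw)]
  · rw [partner, if_neg (not_not.mpr hU.2.1), if_pos ⟨hU, rfl⟩]
  · have hns : ¬ (UsesSpecial sp D u ∧ (e = (sp u).1 ∨ e = (sp u).2)) :=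
      fun h => A.notMem_special_of_mem_edges he' h.1 h.2
    rw [partner, if_neg (not_not.mpr (A.mem_inEdges_of_mem_edges he')),
      if_neg fun h => hns ⟨h.1, .inl h.2⟩, if_neg fun h => hns ⟨h.1, .inr h.2⟩]
  · rw [partner, if_neg (not_not.mpr hU.2.2), if_neg fun h => hne u h.2.symm,
      if_pos ⟨hU, rfl⟩]

lemma exists_of_rel_connector {e : Sym2 V} {y : GVert V}
    (h : A.rel (Sum.inl (e, none)) y ∨ A.rel y (Sum.inl (e, none))) :
    ∃ u w, D u w ∧ e = s(u, w) ∧ y = Sum.inl (e, some u) := by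
  rcases h with (⟨_, _, -, hx, -⟩ | ⟨_, -, hx, -⟩ | ⟨_, _, -, hx, -⟩) |
    (⟨u, w, huw, rfl, hx⟩ | ⟨_, -, -, hx⟩ | ⟨_, _, -, -, hx⟩) <;>
    simp only [Sum.inl.injEq, Prod.mk.injEq, reduceCtorEq, and_false] at hx
  obtain ⟨rfl, -⟩ := hx
  exact ⟨u, w, huw, rfl, rfl⟩

lemma exists_of_rel_gadget {v : V} {i : ℕ} {y : GVert V}
    (h : A.rel (Sum.inr (v, i)) y ∨ A.rel y (Sum.inr (v, i))) :
    ∃ e ∈ A.edges v, A.index v e = i ∧ y = Sum.inl (e, some v) := by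
  rcases h with (⟨_, _, -, hx, -⟩ | ⟨_, -, hx, -⟩ | ⟨_, _, -, hx, -⟩) |
    (⟨_, _, -, -, hx⟩ | ⟨_, -, -, hx⟩ | ⟨v', e, he, rfl, hx⟩) <;>
    simp only [Sum.inr.injEq, Prod.mk.injEq, reduceCtorEq] at hx
  obtain ⟨rfl, rfl⟩ := hx
  exact ⟨e, he, rfl, rfl⟩

lemma isMatching (hD : IsOrientation G D) (hne : ∀ v, (sp v).1 ≠ (sp v).2) :
    (A.matching hD hne).IsMatching := by
  rintro x ⟨y, hy⟩
  refine ⟨y, hy, fun y' hy' => ?_⟩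
  rcases x with ⟨e, _ | u⟩ | ⟨v, i⟩
  · obtain ⟨u, w, huw, rfl, rfl⟩ := A.exists_of_rel_connector hy
    obtain ⟨u', w', huw', he, rfl⟩ := A.exists_of_rel_connector hy'
    rcases Sym2.eq_iff.mp he with ⟨rfl, -⟩ | ⟨rfl, rfl⟩
    · rfl
    · exact absurd huw (hD.not_rev huw')
  · exact (A.eq_partner hD hne hy').trans (A.eq_partner hD hne hy).symm
  · obtain ⟨e, he, rfl, rfl⟩ := A.exists_of_rel_gadget hy
    obtain ⟨e', he', hi, rfl⟩ := A.exists_of_rel_gadget hy'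
    rw [A.injOn_index v he' he hi]

/-- The incoming edges `e` at `v` whose subdivision vertex `v'_e` anchors no edge of the
matching. -/
def defectEdges (v : V) : Set (Sym2 V) :=
  inEdges D v \ (A.edges v ∪ {e | UsesSpecial sp D v ∧ e = (sp v).1})

lemma defectEdges_subset_of_usesSpecial [Finite V] (hD : IsOrientation G D) {v : V}
    (hne : (sp v).1 ≠ (sp v).2) (hU : UsesSpecial sp D v) :
    A.defectEdges v ⊆ {(sp v).2} := by
  have hpair : {(sp v).1, (sp v).2} ⊆ inEdges D v := insert_subset hU.2.1 (by simpa using hU.2.2)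
  have hcand : gadgetCandidates sp D v = inEdges D v \ {(sp v).1, (sp v).2} := if_pos hU
  have hncard : (gadgetCandidates sp D v).ncard + 2 = (inEdges D v).ncard := by
    rw [hcand, ncard_sdiff hpair, ← ncard_pair hne]
    have := ncard_le_ncard hpair finite_inEdges
    omega
  have hdeg := hD.ncard_inEdges_add_outDeg v
  -- the `d(v) - 2` gadget vertices suffice for all the remaining incoming edges
  have hedges : A.edges v = gadgetCandidates sp D v :=
    eq_of_subset_of_ncard_le (A.edges_subset v) (by rw [A.ncard_edges v]; omega)
      (finite_inEdges.subset (gadgetCandidates_subset v))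
  rintro e ⟨he, hnot⟩
  simp only [hedges, hcand, mem_union, mem_sdiff, he, true_and, mem_ofPred_eq, hU,
    mem_insert_iff, not_or] at hnot
  rw [mem_singleton_iff]
  tauto

lemma defectEdges_of_not_usesSpecial {v : V} (hU : ¬ UsesSpecial sp D v) :
    A.defectEdges v = inEdges D v \ A.edges v := by
  simp [defectEdges, hU]

lemma ncard_defectEdges_of_not_usesSpecial [Finite V] {v : V} (hU : ¬ UsesSpecial sp D v) :
    (A.defectEdges v).ncard =
      (inEdges D v).ncard - min (inEdges D v).ncard ({w | G.Adj v w}.ncard - 2) := by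
  have hcand : gadgetCandidates sp D v = inEdges D v := if_neg hU
  have hsub : A.edges v ⊆ inEdges D v := hcand ▸ A.edges_subset v
  rw [A.defectEdges_of_not_usesSpecial hU, ncard_sdiff' hsub finite_inEdges, A.ncard_edges, hcand]

lemma ncard_defectEdges_le_one [Finite V] (hD : IsOrientation G D) {v : V}
    (hsp : IsSpecialPair G v (sp v)) : (A.defectEdges v).ncard ≤ 1 := by
  by_cases hU : UsesSpecial sp D v
  · exact (ncard_le_ncard (A.defectEdges_subset_of_usesSpecial hD hsp.fst_ne_snd hU)).trans
      (ncard_singleton _).le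
  · have hout : outDeg D v ≠ 0 := fun h => hU (usesSpecial_of_outDeg_eq_zero hsp hD h)
    have hdeg := hD.ncard_inEdges_add_outDeg v
    rw [A.ncard_defectEdges_of_not_usesSpecial hU]
    omega

lemma outDeg_le_one_of_mem_defectEdges [Finite V] (hD : IsOrientation G D) {v : V}
    {e : Sym2 V} (he : e ∈ A.defectEdges v) : outDeg D v ≤ 1 := by
  by_cases hU : UsesSpecial sp D v
  · exact hU.1
  · have hpos : 0 < (A.defectEdges v).ncard :=
      (ncard_pos (finite_inEdges.subset sdiff_subset)).mpr ⟨e, he⟩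
    have hdeg := hD.ncard_inEdges_add_outDeg v
    rw [A.ncard_defectEdges_of_not_usesSpecial hU] at hpos
    omega

lemma exists_mem_edgeSet_isAnchor (hsp : ∀ v, IsSpecialPair G v (sp v)) (hD : IsOrientation G D)
    (hne : ∀ v, (sp v).1 ≠ (sp v).2) {d : G.Dart}
    (hd : s(d.fst, d.snd) ∉ A.defectEdges d.fst) :
    ∃ p ∈ (A.matching hD hne).edgeSet, IsAnchor G sp p (subdivisionVertex G d) := by
  obtain ⟨⟨a, b⟩, hab⟩ := d
  by_cases h : D a b
  · exact ⟨_, Subgraph.mem_edgeSet.mpr (.inl (.inl ⟨a, b, h, rfl, rfl⟩)),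
      isAnchor_connector ⟨⟨(a, b), hab⟩, rfl⟩⟩
  have hin : s(a, b) ∈ inEdges D a := ⟨b, (hD.or_rev hab).resolve_left h, Sym2.eq_swap⟩
  simp only [defectEdges, mem_sdiff, hin, true_and, mem_union, mem_ofPred_eq, not_not] at hd
  rcases hd with he | ⟨hU, he⟩
  · exact ⟨_, Subgraph.mem_edgeSet.mpr (.inl (.inr (.inr ⟨a, _, he, rfl, rfl⟩))),
      isAnchor_gadget ⟨⟨(a, b), hab⟩, rfl⟩⟩
  · refine ⟨_, Subgraph.mem_edgeSet.mpr (.inl (.inr (.inl ⟨a, hU, rfl, rfl⟩))), ?_⟩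
    change IsAnchor G sp _ (Sum.inl (s(a, b), some a))
    rw [he]
    exact isAnchor_specialEdge (hsp a)

end GadgetAssignment

theorem exists_isMatching_two_mul_le [Fintype V] (hsp : ∀ v, IsSpecialPair G v (sp v))
    (hD : IsOrientation G D) :
    ∃ M : (Gprime G sp).Subgraph, M.IsMatching ∧
      2 * G.edgeSet.ncard ≤ M.edgeSet.ncard + {v | outDeg D v ≤ 1}.ncard := by
  classical
  obtain ⟨A⟩ := nonempty_gadgetAssignment (G := G) (sp := sp) (D := D)
  have hne : ∀ v, (sp v).1 ≠ (sp v).2 := fun v => (hsp v).fst_ne_snd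
  have hM := A.isMatching hD hne
  refine ⟨A.matching hD hne, hM, ?_⟩
  set bad : Set G.Dart := {d | s(d.fst, d.snd) ∈ A.defectEdges d.fst}
  have h : ∀ d, ∃ p, d ∈ badᶜ →
      p ∈ (A.matching hD hne).edgeSet ∧ IsAnchor G sp p (subdivisionVertex G d) := fun d => by
    by_cases hd : d ∈ badᶜ
    · exact (A.exists_mem_edgeSet_isAnchor hsp hD hne hd).imp fun _ h _ => h
    · exact ⟨s(subdivisionVertex G d, subdivisionVertex G d), fun h => absurd h hd⟩
  choose Θ hΘ using h
  have hgood : badᶜ.ncard ≤ (A.matching hD hne).edgeSet.ncard :=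
    ncard_le_ncard_of_injOn Θ (fun d hd => (hΘ d hd).1)
      (fun d hd d' hd' h => subdivisionVertex_injective <|
        (hΘ d hd).2.eq (Subgraph.edgeSet_subset _ (hΘ d hd).1) (h ▸ (hΘ d' hd').2))
      (finite_edgeSet_of_isMatching hsp hM)
  have hbad : bad.ncard ≤ {v | outDeg D v ≤ 1}.ncard := by
    refine ncard_le_ncard_of_injOn (fun d : G.Dart => d.fst)
      (fun d hd => A.outDeg_le_one_of_mem_defectEdges hD hd) (fun d hd d' hd' h => ?_) (toFinite _)
    replace h : d.fst = d'.fst := h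
    have hfin : (A.defectEdges d.fst).Finite := finite_inEdges.subset sdiff_subset
    have hd'' : s(d'.fst, d'.snd) ∈ A.defectEdges d.fst := by rw [h]; exact hd'
    have he := (ncard_le_one hfin).mp (A.ncard_defectEdges_le_one hD (hsp d.fst)) _ hd _ hd''
    rw [← h] at he
    exact Dart.ext _ _ (Prod.ext h (Sym2.congr_right.mp he))
  have hsum := ncard_add_ncard_compl bad
  rw [card_dart_eq_two_mul_ncard_edgeSet] at hsum
  omega

end Gprime

theorem stmt16_general {V : Type*} [Fintype V] (G : SimpleGraph V)
    (sp : V → Sym2 V × Sym2 V)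
    (hsp : ∀ v, (sp v).1 ∈ G.edgeSet ∧ (sp v).2 ∈ G.edgeSet ∧
      v ∈ (sp v).1 ∧ v ∈ (sp v).2 ∧ (sp v).1 ≠ (sp v).2) :
    (∃ D, IsOrientation G D ∧
      {v | outDeg D v ≤ 1}.ncard = 2 * G.edgeSet.ncard -
        sSup {k | ∃ M : (Gprime G sp).Subgraph, M.IsMatching ∧
          M.edgeSet.ncard = k}) ∧
    ∀ M : (Gprime G sp).Subgraph, M.IsMatching →
      (∀ M' : (Gprime G sp).Subgraph, M'.IsMatching →
        M'.edgeSet.ncard ≤ M.edgeSet.ncard) →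
      ∀ D, IsOrientation G D →
        (∀ u v, G.Adj u v →
          s(Sum.inl (s(u, v), some u), Sum.inl (s(u, v), none)) ∈ M.edgeSet →
          D u v) →
        {v | outDeg D v ≤ 1}.ncard ≤ 2 * G.edgeSet.ncard - M.edgeSet.ncard := by
  have hsp' : ∀ v, Gprime.IsSpecialPair G v (sp v) := fun v =>
    let ⟨h₁, h₂, h₃, h₄, h₅⟩ := hsp v
    ⟨h₁, h₂, h₃, h₄, h₅⟩
  refine ⟨?_, fun M hM _ D _ hD => ?_⟩
  · set S := {k | ∃ M : (Gprime G sp).Subgraph, M.IsMatching ∧ M.edgeSet.ncard = k}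
    have hS : BddAbove S := ⟨_, by
      rintro _ ⟨M, hM, rfl⟩
      exact Gprime.ncard_edgeSet_le_of_isMatching hsp' hM⟩
    have hS₀ : S.Nonempty := ⟨0, ⊥, fun _ h => h.elim, by simp⟩
    obtain ⟨M, hM, hMmax⟩ := Nat.sSup_mem hS₀ hS
    obtain ⟨D, hDo, hD⟩ := Gprime.exists_isOrientation_followsMatching hM
    obtain ⟨M', hM', hM'le⟩ := Gprime.exists_isMatching_two_mul_le hsp' hDo
    have := Gprime.ncard_light_add_ncard_edgeSet_le hsp' hM hD
    have := le_csSup hS ⟨M', hM', rfl⟩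
    exact ⟨D, hDo, by omega⟩
  · have := Gprime.ncard_light_add_ncard_edgeSet_le hsp' hM hD
    omega

theorem stmt16 {V : Type*} [Fintype V] (G : SimpleGraph V)
    (hdeg : ∀ v, 2 ≤ {w | G.Adj v w}.ncard)
    (sp : V → Sym2 V × Sym2 V)
    (hsp : ∀ v, (sp v).1 ∈ G.edgeSet ∧ (sp v).2 ∈ G.edgeSet ∧
      v ∈ (sp v).1 ∧ v ∈ (sp v).2 ∧ (sp v).1 ≠ (sp v).2) :
    (∃ D, IsOrientation G D ∧
      {v | outDeg D v ≤ 1}.ncard = 2 * G.edgeSet.ncard -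
        sSup {k | ∃ M : (Gprime G sp).Subgraph, M.IsMatching ∧
          M.edgeSet.ncard = k}) ∧
    ∀ M : (Gprime G sp).Subgraph, M.IsMatching →
      (∀ M' : (Gprime G sp).Subgraph, M'.IsMatching →
        M'.edgeSet.ncard ≤ M.edgeSet.ncard) →
      ∀ D, IsOrientation G D →
        (∀ u v, G.Adj u v →
          s(Sum.inl (s(u, v), some u), Sum.inl (s(u, v), none)) ∈ M.edgeSet →
          D u v) →
        {v | outDeg D v ≤ 1}.ncard ≤ 2 * G.edgeSet.ncard - M.edgeSet.ncard :=
  stmt16_general G sp hsp
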